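/- arXiv:2603.28500 — 9 statements merged into one kernel-verified Lean document; each statement's English description precedes it below -/
import Mathlib

section
/- Let V be a finite-dimensional vector space and M a monoid of linear endomorphisms of V generated by projections of corank 1 (idempotent linear maps whose image has codimension 1). A subspace W of V is invariant under M (i.e. m(W) ⊆ W for all m ∈ M) if and only if for every generating projection p either ker(p) ⊆ W or W ⊆ im(p). -/
/-!
An idempotent `p` acts as the identity on `range p` and kills `w - p w` for every `w`, so
a subspace `W` with `W ≤ range p` or `ker p ≤ W` is `p`-invariant. Conversely, if `W` is
`p`-invariant but not contained in `range p`, some `w ∈ W` has `w - p w ≠ 0`, a nonzero vector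
of `W ⊓ ker p`; when `ker p` is a line this forces `ker p ≤ W`. Since the endomorphisms
leaving `W` invariant form a submonoid, invariance under the monoid generated by `P` reduces to
invariance under each generator.
-/

open LinearMap Module.End

def Submodule.invtEndSubmonoid {R M : Type*} [Semiring R] [AddCommMonoid M] [Module R M]
    (W : Submodule R M) : Submonoid (Module.End R M) where
  carrier := {f | W ∈ f.invtSubmodule}
  mul_mem' hf hg _ hx := hf (hg hx)
  one_mem' := by simp

namespace LinearMap.IsIdempotentElem

variable {R M : Type*} [Ring R] [AddCommGroup M] [Module R M] {p : Module.End R M}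
  {W : Submodule R M}

lemma sub_apply_mem_ker (hp : IsIdempotentElem p) (x : M) : x - p x ∈ ker p :=
  hp.ker_eq_range_one_sub ▸ mem_range_self (1 - p) x

lemma mem_invtSubmodule_of_ker_le (hp : IsIdempotentElem p) (h : ker p ≤ W) :
    W ∈ p.invtSubmodule := fun w hw ↦ by
  simpa using W.sub_mem hw (h (hp.sub_apply_mem_ker w))

lemma mem_invtSubmodule_of_le_range (hp : IsIdempotentElem p) (h : W ≤ range p) :
    W ∈ p.invtSubmodule := fun w hw ↦ by
  simpa [(hp.mem_range_iff).mp (h hw)] using hw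

lemma inf_ker_ne_bot_of_not_le_range (hp : IsIdempotentElem p) (hW : W ∈ p.invtSubmodule)
    (h : ¬W ≤ range p) : W ⊓ ker p ≠ ⊥ := by
  obtain ⟨w, hwW, hw⟩ := SetLike.not_le_iff_exists.mp h
  refine (Submodule.ne_bot_iff _).mpr
    ⟨w - p w, ⟨W.sub_mem hwW (hW hwW), hp.sub_apply_mem_ker w⟩, ?_⟩
  rwa [sub_ne_zero, ne_comm, Ne, ← hp.mem_range_iff]

lemma mem_invtSubmodule_iff_of_isAtom_ker (hp : IsIdempotentElem p) (hk : IsAtom (ker p)) :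
    W ∈ p.invtSubmodule ↔ ker p ≤ W ∨ W ≤ range p := by
  refine ⟨fun hW ↦ or_iff_not_imp_right.mpr fun h ↦ ?_, ?_⟩
  · have hmeet := (hk.le_iff.mp inf_le_right).resolve_left
      (hp.inf_ker_ne_bot_of_not_le_range hW h)
    exact hmeet ▸ inf_le_left
  · rintro (h | h)
    exacts [hp.mem_invtSubmodule_of_ker_le h, hp.mem_invtSubmodule_of_le_range h]

end LinearMap.IsIdempotentElem

theorem stmt_0_general {F V : Type*} [Field F] [AddCommGroup V] [Module F V]
    (P : Set (Module.End F V))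
    (hP : ∀ p ∈ P, p * p = p ∧ Module.finrank F (LinearMap.ker p) = 1)
    (W : Submodule F V) :
    (∀ m ∈ Submonoid.closure P, ∀ w ∈ W, m w ∈ W) ↔
      (∀ p ∈ P, LinearMap.ker p ≤ W ∨ W ≤ LinearMap.range p) :=
  calc (∀ m ∈ Submonoid.closure P, ∀ w ∈ W, m w ∈ W)
      ↔ Submonoid.closure P ≤ W.invtEndSubmonoid := Iff.rfl
    _ ↔ ∀ p ∈ P, W ∈ p.invtSubmodule := Submonoid.closure_le
    _ ↔ _ := forall₂_congr fun p hp ↦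
      IsIdempotentElem.mem_invtSubmodule_iff_of_isAtom_ker (hP p hp).1
        (Submodule.isAtom_iff_finrank_eq_one.mpr (hP p hp).2)

/-- Let `V` be a finite-dimensional vector space and `M` the monoid of
linear endomorphisms of `V` generated by a set `P` of projections of corank 1
(idempotents of nullity 1).  A subspace `W` is invariant under `M` iff for every
generating projection `p`, either `ker p ⊆ W` or `W ⊆ im p`. -/
theorem stmt_0 {F V : Type*} [Field F] [AddCommGroup V] [Module F V]
    [FiniteDimensional F V]
    (P : Set (Module.End F V))
    (hP : ∀ p ∈ P, p * p = p ∧ Module.finrank F (LinearMap.ker p) = 1)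
    (W : Submodule F V) :
    (∀ m ∈ Submonoid.closure P, ∀ w ∈ W, m w ∈ W) ↔
      (∀ p ∈ P, LinearMap.ker p ≤ W ∨ W ≤ LinearMap.range p) :=
  stmt_0_general P hP W
end

section
/- Let M be a non-trivial finite irreducible projection monoid on a finite-dimensional vector space V. Then the sum of the kernels of all projections in M equals V, and the intersection of the images of all projections in M equals 0. -/
/-!
Write `M` as the closure of a set `P` of projections. The sum `W` of the kernels is invariant
under each `p ∈ P`, because `p w - w ∈ ker p ⊆ W`, and the intersection `L` of the images is fixed
pointwise by each `p ∈ P`; hence both are `M`-invariant, and irreducibility makes each of them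
`0` or `V`. Since `M` is non-trivial, `P` contains a projection `p₀`, whose kernel is a line in
`W` and whose image is a proper subspace containing `L`; this excludes `W = 0` and `L = V`.
-/

/-- A projection: an idempotent linear endomorphism of nullity 1. -/
def IsProj1 {F V : Type*} [Field F] [AddCommGroup V] [Module F V]
    (p : Module.End F V) : Prop :=
  p * p = p ∧ Module.finrank F (LinearMap.ker p) = 1

section Invariance

variable {R V : Type*} [Semiring R] [AddCommMonoid V] [Module R V]

theorem Submodule.apply_mem_of_mem_closure {P : Set (Module.End R V)} {W : Submodule R V}
    (hP : ∀ p ∈ P, ∀ w ∈ W, p w ∈ W) : ∀ m ∈ Submonoid.closure P, ∀ w ∈ W, m w ∈ W := by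
  intro m hm
  induction hm using Submonoid.closure_induction with
  | mem p hp => exact hP p hp
  | one => exact fun w hw => hw
  | mul a b _ _ ha hb => exact fun w hw => ha _ (hb w hw)

theorem IsIdempotentElem.apply_mem_of_le_range {p : Module.End R V} (hp : IsIdempotentElem p)
    {W : Submodule R V} (hW : W ≤ LinearMap.range p) {w : V} (hw : w ∈ W) : p w ∈ W := by
  rwa [(LinearMap.IsIdempotentElem.mem_range_iff hp).mp (hW hw)]

end Invariance

theorem IsIdempotentElem.apply_mem_of_ker_le {R V : Type*} [Ring R] [AddCommGroup V]
    [Module R V] {p : Module.End R V} (hp : IsIdempotentElem p) {W : Submodule R V}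
    (hW : LinearMap.ker p ≤ W) {w : V} (hw : w ∈ W) : p w ∈ W := by
  have hker : p w - w ∈ LinearMap.ker p := by
    rw [LinearMap.mem_ker, map_sub, ← Module.End.mul_apply, hp.eq, sub_self]
  simpa using W.add_mem (hW hker) hw

namespace IsProj1

variable {F V : Type*} [Field F] [AddCommGroup V] [Module F V] {p : Module.End F V}

theorem isIdempotentElem (hp : IsProj1 p) : IsIdempotentElem p := hp.1

theorem ker_ne_bot (hp : IsProj1 p) : LinearMap.ker p ≠ ⊥ := by
  intro h
  have h1 := hp.2
  rw [h, finrank_bot] at h1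
  exact zero_ne_one h1

theorem range_ne_top (hp : IsProj1 p) : LinearMap.range p ≠ ⊤ := fun h =>
  hp.ker_ne_bot <| eq_bot_of_top_isCompl <|
    h ▸ LinearMap.IsIdempotentElem.isCompl hp.isIdempotentElem

end IsProj1

theorem Submonoid.nonempty_of_mem_closure_of_ne_one {M : Type*} [Monoid M] {P : Set M} {m : M}
    (hm : m ∈ Submonoid.closure P) (hm1 : m ≠ 1) : P.Nonempty := by
  rw [Set.nonempty_iff_ne_empty]
  rintro rfl
  rw [Submonoid.closure_empty, Submonoid.mem_bot] at hm
  exact hm1 hm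

theorem stmt_1_general {F V : Type*} [Field F] [AddCommGroup V] [Module F V]
    (M : Submonoid (Module.End F V))
    (hgen : ∃ P : Set (Module.End F V), (∀ p ∈ P, IsProj1 p) ∧ M = Submonoid.closure P)
    (hnontriv : ∃ m ∈ M, m ≠ 1)
    (hirr : ∀ W : Submodule F V, (∀ m ∈ M, ∀ w ∈ W, m w ∈ W) → W = ⊥ ∨ W = ⊤) :
    (⨆ p ∈ {p : Module.End F V | p ∈ M ∧ IsProj1 p}, LinearMap.ker p) = ⊤ ∧
    (⨅ p ∈ {p : Module.End F V | p ∈ M ∧ IsProj1 p}, LinearMap.range p) = ⊥ := by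
  obtain ⟨P, hP, rfl⟩ := hgen
  obtain ⟨m, hm, hm1⟩ := hnontriv
  obtain ⟨p₀, hp₀⟩ := Submonoid.nonempty_of_mem_closure_of_ne_one hm hm1
  have hPS : ∀ p ∈ P, p ∈ {p | p ∈ Submonoid.closure P ∧ IsProj1 p} :=
    fun p hp => ⟨Submonoid.subset_closure hp, hP p hp⟩
  constructor
  · have hker_le : ∀ p ∈ P, LinearMap.ker p ≤
        ⨆ p ∈ {p | p ∈ Submonoid.closure P ∧ IsProj1 p}, LinearMap.ker p :=
      fun p hp => le_iSup₂ (f := fun p _ => LinearMap.ker p) p (hPS p hp)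
    refine (hirr _ (Submodule.apply_mem_of_mem_closure fun p hp _ hw =>
      (hP p hp).isIdempotentElem.apply_mem_of_ker_le (hker_le p hp) hw)).resolve_left ?_
    exact fun h => (hP p₀ hp₀).ker_ne_bot (eq_bot_iff.2 (h ▸ hker_le p₀ hp₀))
  · have hle_range : ∀ p ∈ P,
        ⨅ p ∈ {p | p ∈ Submonoid.closure P ∧ IsProj1 p}, LinearMap.range p ≤ LinearMap.range p :=
      fun p hp => iInf₂_le (f := fun p _ => LinearMap.range p) p (hPS p hp)
    refine (hirr _ (Submodule.apply_mem_of_mem_closure fun p hp _ hw =>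
      (hP p hp).isIdempotentElem.apply_mem_of_le_range (hle_range p hp) hw)).resolve_right ?_
    exact fun h => (hP p₀ hp₀).range_ne_top (eq_top_iff.2 (h ▸ hle_range p₀ hp₀))

/-- If `M` is a non-trivial finite irreducible projection monoid on a
finite-dimensional vector space `V`, then the sum of the kernels of the projections in
`M` is all of `V`, and the intersection of the images of the projections in `M` is `0`. -/
theorem stmt_1 {F V : Type*} [Field F] [AddCommGroup V] [Module F V]
    [FiniteDimensional F V]
    (M : Submonoid (Module.End F V))
    (hgen : ∃ P : Set (Module.End F V), (∀ p ∈ P, IsProj1 p) ∧ M = Submonoid.closure P)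
    (hfin : (M : Set (Module.End F V)).Finite)
    (hnontriv : ∃ m ∈ M, m ≠ 1)
    (hirr : ∀ W : Submodule F V, (∀ m ∈ M, ∀ w ∈ W, m w ∈ W) → W = ⊥ ∨ W = ⊤) :
    (⨆ p ∈ {p : Module.End F V | p ∈ M ∧ IsProj1 p}, LinearMap.ker p) = ⊤ ∧
    (⨅ p ∈ {p : Module.End F V | p ∈ M ∧ IsProj1 p}, LinearMap.range p) = ⊥ :=
  stmt_1_general M hgen hnontriv hirr
end

section
/- Let M be a finite irreducible projection monoid on a finite-dimensional vector space V. If K is a kernel of M and L is an image of M with K not contained in L, then the projection with kernel K and image L lies in M (i.e., M is complete). -/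
/-!
The adjugate is an anti-multiplicative map on `End V` with `adj p = 1 - p` for every
projection `p`, and `adj f = 0` as soon as `rank f ≤ n - 2`. Take projections `p, q ∈ M` with
kernel `K` and image `L`, and `u ≠ 0` in `ker q`. Since `p' (adj m u) = adj m u - adj (m p') u`
for every generator `p'`, the span of `{adj m u | m ∈ M}` is `M`-invariant and contains
`u = adj 1 u`, so by irreducibility it is `V`: some `m ∈ M` has `adj m u ∉ im p`. Then
`adj (q m p) u = (1 - p) (adj m u) ≠ 0`, so `s = q m p` has rank `n - 1`, whence `ker s = K` and
`im s = L`. As `K ∩ L = 0`, all positive powers of `s` share this kernel and image, and since `M`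
is finite one of them is idempotent.
-/

open Module LinearMap Matrix Submodule

section Adjugate

variable {ι R M : Type*} [Fintype ι] [DecidableEq ι] [CommRing R]

theorem Matrix.adjugate_conj {P Q : Matrix ι ι R} (hPQ : P * Q = 1) (A : Matrix ι ι R) :
    adjugate (P * A * Q) = P * adjugate A * Q := by
  have hQP : Q * P = 1 := mul_eq_one_comm.mp hPQ
  have hP : adjugate P = P.det • Q := by
    rw [← one_mul P.adjugate, ← hQP, Matrix.mul_assoc, mul_adjugate, Matrix.mul_smul,
      Matrix.mul_one]
  have hQ : adjugate Q = Q.det • P := by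
    rw [← one_mul Q.adjugate, ← hPQ, Matrix.mul_assoc, mul_adjugate, Matrix.mul_smul,
      Matrix.mul_one]
  have hdet : P.det * Q.det = 1 := by rw [← det_mul, hPQ, det_one]
  rw [adjugate_mul_distrib, adjugate_mul_distrib, hP, hQ]
  simp only [smul_mul, Matrix.mul_smul, smul_smul, Matrix.mul_assoc, hdet, one_smul]

theorem Matrix.adjugate_diagonal_sum_elim_one_zero {κ : Type*} [Fintype κ] [DecidableEq κ]
    [Unique κ] :
    adjugate (diagonal (Sum.elim 1 0 : ι ⊕ κ → R)) = diagonal (Sum.elim 0 1) := by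
  rw [adjugate_diagonal]
  congr 1
  funext i
  rcases i with i | i
  · refine Finset.prod_eq_zero (i := Sum.inr default) (by simp) rfl
  · refine Finset.prod_eq_one fun j hj => ?_
    rcases j with j | j
    · rfl
    · exact absurd (congrArg Sum.inr (Subsingleton.elim j i)) (Finset.mem_erase.mp hj).1

theorem LinearMap.toMatrix_eq_diagonal [AddCommGroup M] [Module R M] {b : Basis ι R M}
    {f : Module.End R M} {d : ι → R} (h : ∀ i, f (b i) = d i • b i) :
    toMatrix b b f = diagonal d := by
  ext i j
  rcases eq_or_ne i j with rfl | hij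
  · simp [toMatrix_apply, h]
  · simp [toMatrix_apply, h, hij]

variable [Nontrivial R] [AddCommGroup M] [Module R M] [Module.Free R M] [Module.Finite R M]

noncomputable def Module.End.adjugate (f : Module.End R M) : Module.End R M :=
  toLin (finBasis R M) (finBasis R M) (toMatrix (finBasis R M) (finBasis R M) f).adjugate

namespace Module.End

theorem toMatrix_adjugate (b : Basis ι R M) (f : Module.End R M) :
    toMatrix b b f.adjugate = (toMatrix b b f).adjugate := by
  set e := (finBasis R M).indexEquiv b
  set c := (finBasis R M).reindex e
  have hc : ∀ g : Module.End R M,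
      toMatrix c c g = reindex e e (toMatrix (finBasis R M) (finBasis R M) g) := by
    intro g
    ext i j
    simp [c, toMatrix_apply]
  rw [← basis_toMatrix_mul_linearMap_toMatrix_mul_basis_toMatrix b c b c f.adjugate,
    ← basis_toMatrix_mul_linearMap_toMatrix_mul_basis_toMatrix b c b c f,
    adjugate_conj (b.toMatrix_mul_toMatrix_flip c), hc, hc, adjugate_reindex, adjugate,
    toMatrix_toLin]

theorem adjugate_one : (1 : Module.End R M).adjugate = 1 := by
  apply (toMatrix (finBasis R M) (finBasis R M)).injective
  rw [toMatrix_adjugate, toMatrix_one, Matrix.adjugate_one]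

theorem adjugate_mul (f g : Module.End R M) : (f * g).adjugate = g.adjugate * f.adjugate := by
  apply (toMatrix (finBasis R M) (finBasis R M)).injective
  simp only [toMatrix_adjugate, toMatrix_mul, adjugate_mul_distrib]

end Module.End

end Adjugate

section AdjugateOverField

variable {ι F V : Type*} [Fintype ι] [DecidableEq ι] [Field F]

theorem Matrix.det_eq_zero_of_rows_mem {A : Matrix ι ι F} {S : Submodule F (ι → F)}
    (hA : ∀ i, A i ∈ S) (hS : finrank F S < Fintype.card ι) : A.det = 0 := by
  by_contra hdet
  have hspan := Submodule.finrank_mono (Submodule.span_le.mpr (Set.range_subset_iff.mpr hA))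
  rw [finrank_span_eq_card (linearIndependent_rows_of_det_ne_zero hdet)] at hspan
  omega

theorem Matrix.adjugate_eq_zero_of_rows_mem {A : Matrix ι ι F} {S : Submodule F (ι → F)}
    (hA : ∀ i, A i ∈ S) (hS : finrank F S + 1 < Fintype.card ι) : adjugate A = 0 := by
  ext i j
  rw [adjugate_apply, zero_apply]
  refine det_eq_zero_of_rows_mem (S := S ⊔ F ∙ Pi.single i 1) (fun k => ?_) ?_
  · rcases eq_or_ne k j with rfl | hk
    · rw [updateRow_self]
      exact Submodule.mem_sup_right (Submodule.mem_span_singleton_self _)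
    · rw [updateRow_ne hk]
      exact Submodule.mem_sup_left (hA k)
  · calc finrank F ↥(S ⊔ F ∙ Pi.single i 1)
        ≤ finrank F S + finrank F (F ∙ (Pi.single i 1 : ι → F)) :=
          Submodule.finrank_add_le_finrank_add_finrank _ _
      _ = finrank F S + 1 := by rw [finrank_span_singleton (by simp)]
      _ < Fintype.card ι := hS

variable [AddCommGroup V] [Module F V] [FiniteDimensional F V]

theorem Module.End.adjugate_eq_zero_of_finrank_range_add_one_lt {f : Module.End F V}
    (hf : finrank F (range f) + 1 < finrank F V) : f.adjugate = 0 := by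
  set b := finBasis F V
  apply (toMatrix b b).injective
  have hrows : ∀ k, (toMatrix b b f)ᵀ k ∈ (range f).map (b.equivFun : V →ₗ[F] _) :=
    fun k => ⟨f (b k), mem_range_self f (b k), by ext l; simp [toMatrix_apply]⟩
  rw [toMatrix_adjugate, map_zero, ← transpose_transpose (toMatrix b b f), ← adjugate_transpose,
    adjugate_eq_zero_of_rows_mem hrows, transpose_zero]
  rwa [LinearEquiv.finrank_map_eq, ← finrank_eq_card_basis b]

theorem Module.End.adjugate_eq_one_sub_of_isIdempotentElem {p : Module.End F V}
    (hp : IsIdempotentElem p) (hker : finrank F (ker p) = 1) : p.adjugate = 1 - p := by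
  let c := ((finBasis F (range p)).prod (finBasisOfFinrankEq F (ker p) hker)).map
    (Submodule.prodEquivOfIsCompl _ _ hp.isCompl)
  have hc : toMatrix c c p = diagonal (Sum.elim 1 0) := by
    refine toMatrix_eq_diagonal fun i => ?_
    rcases i with i | i
    · simpa [c] using hp.mem_range_iff.mp (finBasis F (range p) i).2
    · simp [c]
  apply (toMatrix c c).injective
  rw [toMatrix_adjugate, hc, adjugate_diagonal_sum_elim_one_zero, map_sub, toMatrix_one, hc,
    ← diagonal_one, diagonal_sub]
  congr 1
  funext i
  rcases i with i | i <;> simp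

end AdjugateOverField

theorem exists_pow_isIdempotentElem {G : Type*} [Monoid G] [Finite G] (s : G) :
    ∃ n ≠ 0, IsIdempotentElem (s ^ n) := by
  obtain ⟨i, j, hij, hs⟩ := Finite.exists_ne_map_eq_of_infinite (s ^ · : ℕ → G)
  wlog hlt : i < j generalizing i j
  · exact this j i hij.symm hs.symm (by omega)
  obtain ⟨d, rfl⟩ := Nat.exists_eq_add_of_lt hlt
  have hperiod : ∀ c m, s ^ (i + m + c * (d + 1)) = s ^ (i + m) := by
    intro c
    induction c with
    | zero => simp
    | succ c ih =>
      intro m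
      calc s ^ (i + m + (c + 1) * (d + 1)) = s ^ (i + d + 1) * s ^ (m + c * (d + 1)) := by
            rw [← pow_add]; ring_nf
        _ = s ^ (i + m + c * (d + 1)) := by rw [← hs, ← pow_add]; ring_nf
        _ = s ^ (i + m) := ih m
  refine ⟨(i + 1) * (d + 1), by positivity, ?_⟩
  obtain ⟨m, hm⟩ : ∃ m, (i + 1) * (d + 1) = i + m := ⟨i * d + d + 1, by ring⟩
  have h := hperiod (i + 1) m
  rwa [← hm, pow_add] at h

section

variable {F V : Type*} [Field F] [AddCommGroup V] [Module F V]

theorem ker_pow_eq_ker_of_disjoint {f : Module.End F V} (h : Disjoint (ker f) (range f))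
    {n : ℕ} (hn : n ≠ 0) : ker (f ^ n) = ker f := by
  have hsq : ker (f ^ 1) = ker (f ^ 2) := by
    refine le_antisymm (ker_le_ker_comp _ _) fun x hx => ?_
    exact h.le_bot ⟨by simpa [pow_two] using hx, mem_range_self f x⟩
  obtain ⟨m, rfl⟩ := Nat.exists_eq_add_of_le (Nat.one_le_iff_ne_zero.mpr hn)
  rw [← Module.End.ker_pow_constant hsq m, pow_one]

variable [FiniteDimensional F V]

theorem range_pow_eq_range_of_disjoint {f : Module.End F V} (h : Disjoint (ker f) (range f))
    {n : ℕ} (hn : n ≠ 0) : range (f ^ n) = range f := by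
  obtain ⟨m, rfl⟩ := Nat.exists_eq_add_of_le' (Nat.one_le_iff_ne_zero.mpr hn)
  refine Submodule.eq_of_le_of_finrank_le ?_ ?_
  · rw [pow_succ', Module.End.mul_eq_comp]
    exact range_comp_le_range _ _
  · have h1 := finrank_range_add_finrank_ker f
    have h2 := finrank_range_add_finrank_ker (f ^ (m + 1))
    rw [ker_pow_eq_ker_of_disjoint h hn] at h2
    omega

theorem Submodule.disjoint_of_finrank_eq_one_of_not_le {K L : Submodule F V}
    (hK : finrank F K = 1) (h : ¬K ≤ L) : Disjoint K L := by
  have := Submodule.finrank_lt_finrank_of_lt (inf_lt_left.mpr h)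
  rw [disjoint_iff, ← Submodule.finrank_eq_zero]
  omega

theorem IsProj1.adjugate_eq {p : Module.End F V} (hp : IsProj1 p) : p.adjugate = 1 - p :=
  Module.End.adjugate_eq_one_sub_of_isIdempotentElem hp.1 hp.2

theorem IsProj1.finrank_range_add_one {p : Module.End F V} (hp : IsProj1 p) :
    finrank F (range p) + 1 = finrank F V :=
  hp.2 ▸ finrank_range_add_finrank_ker p

theorem Module.End.finrank_le_finrank_range_add_one_of_adjugate_ne_zero {f : Module.End F V}
    (hf : f.adjugate ≠ 0) :
    finrank F V ≤ finrank F (range f) + 1 :=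
  not_lt.mp (mt adjugate_eq_zero_of_finrank_range_add_one_lt hf)

end

section ProjectionMonoid

variable {F V : Type*} [Field F] [AddCommGroup V] [Module F V] [FiniteDimensional F V]
  {P : Set (Module.End F V)}

def adjugateOrbitSpan (S : Submonoid (Module.End F V)) (u : V) : Submodule F V :=
  span F ((fun m : Module.End F V => m.adjugate u) '' S)

theorem adjugate_apply_mem_adjugateOrbitSpan {S : Submonoid (Module.End F V)} {m : Module.End F V}
    (hm : m ∈ S) (u : V) : m.adjugate u ∈ adjugateOrbitSpan S u :=
  subset_span ⟨m, hm, rfl⟩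

theorem map_mem_adjugateOrbitSpan (hP : ∀ p ∈ P, IsProj1 p) (u : V) {g : Module.End F V}
    (hg : g ∈ Submonoid.closure P) {w : V}
    (hw : w ∈ adjugateOrbitSpan (Submonoid.closure P) u) :
    g w ∈ adjugateOrbitSpan (Submonoid.closure P) u := by
  set W := adjugateOrbitSpan (Submonoid.closure P) u
  induction hg using Submonoid.closure_induction generalizing w with
  | mem p hp =>
    suffices W ≤ W.comap p from this hw
    refine Submodule.span_le.mpr ?_
    rintro _ ⟨m, hm, rfl⟩
    have hmp : p (m.adjugate u) = m.adjugate u - (m * p).adjugate u := by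
      simp [Module.End.adjugate_mul, (hP p hp).adjugate_eq]
    rw [SetLike.mem_coe, Submodule.mem_comap, hmp]
    exact sub_mem (adjugate_apply_mem_adjugateOrbitSpan hm u)
      (adjugate_apply_mem_adjugateOrbitSpan (mul_mem hm (Submonoid.subset_closure hp)) u)
  | one => exact hw
  | mul g h _ _ ihg ihh => exact ihg (ihh hw)

theorem exists_adjugate_apply_notMem (hP : ∀ p ∈ P, IsProj1 p)
    (hirr : ∀ W : Submodule F V, (∀ m ∈ Submonoid.closure P, ∀ w ∈ W, m w ∈ W) →
      W = ⊥ ∨ W = ⊤)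
    {u : V} (hu : u ≠ 0) {H : Submodule F V} (hH : H ≠ ⊤) :
    ∃ m ∈ Submonoid.closure P, m.adjugate u ∉ H := by
  by_contra! hle
  set W := adjugateOrbitSpan (Submonoid.closure P) u
  have huW : u ∈ W := by
    simpa [Module.End.adjugate_one] using
      adjugate_apply_mem_adjugateOrbitSpan (one_mem (Submonoid.closure P)) u
  rcases hirr W fun g hg w hw => map_mem_adjugateOrbitSpan hP u hg hw with hW | hW
  · rw [hW] at huW
    exact hu ((mem_bot F).mp huW)
  · refine hH (eq_top_iff.mpr (hW ▸ span_le.mpr ?_))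
    rintro _ ⟨m, hm, rfl⟩
    exact hle m hm

theorem exists_mem_closure_ker_eq_range_eq (hP : ∀ p ∈ P, IsProj1 p)
    (hirr : ∀ W : Submodule F V, (∀ m ∈ Submonoid.closure P, ∀ w ∈ W, m w ∈ W) →
      W = ⊥ ∨ W = ⊤)
    {p q : Module.End F V} (hpM : p ∈ Submonoid.closure P) (hp : IsProj1 p)
    (hqM : q ∈ Submonoid.closure P) (hq : IsProj1 q) :
    ∃ s ∈ Submonoid.closure P, ker s = ker p ∧ range s = range q := by
  obtain ⟨u, huq, hu⟩ := Submodule.exists_mem_ne_zero_of_ne_bot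
    (Submodule.one_le_finrank_iff.mp hq.2.ge)
  have hrange_p : range p ≠ ⊤ := fun h => by
    have := hp.finrank_range_add_one
    rw [h, finrank_top] at this
    omega
  obtain ⟨m, hmM, hmu⟩ := exists_adjugate_apply_notMem hP hirr hu hrange_p
  refine ⟨q * m * p, mul_mem (mul_mem hqM hmM) hpM, ?_⟩
  have hadj : (q * m * p).adjugate ≠ 0 := fun h => hmu <| by
    have hs : (q * m * p).adjugate u = m.adjugate u - p (m.adjugate u) := by
      simp [Module.End.adjugate_mul, hp.adjugate_eq, hq.adjugate_eq, mem_ker.mp huq]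
    rw [h, LinearMap.zero_apply, eq_comm, sub_eq_zero] at hs
    exact hs ▸ mem_range_self p _
  have hrank := Module.End.finrank_le_finrank_range_add_one_of_adjugate_ne_zero hadj
  have hnull := finrank_range_add_finrank_ker (q * m * p)
  constructor
  · refine (eq_of_le_of_finrank_le (ker_le_ker_comp p (q * m)) ?_).symm
    change finrank F (ker (q * m * p)) ≤ _
    have := hp.2
    omega
  · refine Submodule.eq_of_le_of_finrank_le ?_ ?_
    · rintro _ ⟨x, rfl⟩
      exact ⟨m (p x), rfl⟩
    · have := hq.finrank_range_add_one
      omega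

end ProjectionMonoid

/-- A finite irreducible projection monoid `M` on a finite-dimensional
vector space is complete: if `K` is a kernel of `M` and `L` is an image of `M` with
`K ⊄ L`, then the projection with kernel `K` and image `L` lies in `M`. -/
theorem stmt_2 {F V : Type*} [Field F] [AddCommGroup V] [Module F V]
    [FiniteDimensional F V]
    (M : Submonoid (Module.End F V))
    (hgen : ∃ P : Set (Module.End F V), (∀ p ∈ P, IsProj1 p) ∧ M = Submonoid.closure P)
    (hfin : (M : Set (Module.End F V)).Finite)
    (hirr : ∀ W : Submodule F V, (∀ m ∈ M, ∀ w ∈ W, m w ∈ W) → W = ⊥ ∨ W = ⊤)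
    (K L : Submodule F V)
    (hK : ∃ p ∈ M, IsProj1 p ∧ LinearMap.ker p = K)
    (hL : ∃ p ∈ M, IsProj1 p ∧ LinearMap.range p = L)
    (hKL : ¬ K ≤ L) :
    ∃ r ∈ M, r * r = r ∧ LinearMap.ker r = K ∧ LinearMap.range r = L := by
  obtain ⟨P, hP, rfl⟩ := hgen
  obtain ⟨p, hpM, hp, rfl⟩ := hK
  obtain ⟨q, hqM, hq, rfl⟩ := hL
  obtain ⟨s, hsM, hker, hrange⟩ := exists_mem_closure_ker_eq_range_eq hP hirr hpM hp hqM hq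
  have hdisj : Disjoint (ker s) (range s) := by
    rw [hker, hrange]
    exact Submodule.disjoint_of_finrank_eq_one_of_not_le hp.2 hKL
  have := hfin.to_subtype
  obtain ⟨n, hn, hidem⟩ := exists_pow_isIdempotentElem (⟨s, hsM⟩ : Submonoid.closure P)
  refine ⟨s ^ n, pow_mem hsM n, congrArg Subtype.val hidem, ?_, ?_⟩
  · rw [ker_pow_eq_ker_of_disjoint hdisj hn, hker]
  · rw [range_pow_eq_range_of_disjoint hdisj hn, hrange]
end

section
/- Let M be a finite projection monoid on a finite-dimensional vector space V, let S be the sum of the kernels of M and T the intersection of the images of M. If V = S ⊕ T and M is complete, then M is completely reducible: for every M-invariant subspace W there exists an M-invariant subspace X with V = W ⊕ X. -/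
/-- The set of kernels of a projection monoid `M`. -/
def kersOf {F V : Type*} [Field F] [AddCommGroup V] [Module F V]
    (M : Submonoid (Module.End F V)) : Set (Submodule F V) :=
  {K | ∃ p ∈ M, IsProj1 p ∧ LinearMap.ker p = K}

/-- The set of images of a projection monoid `M`. -/
def imsOf {F V : Type*} [Field F] [AddCommGroup V] [Module F V]
    (M : Submonoid (Module.End F V)) : Set (Submodule F V) :=
  {L | ∃ p ∈ M, IsProj1 p ∧ LinearMap.range p = L}

theorem isCompl_sup_of_inf_sup_eq {α : Type*} [Lattice α] [BoundedOrder α] [IsModularLattice α]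
    {a s b c : α} (hdis : Disjoint (a ⊓ s) b) (hsup : a ⊓ s ⊔ b = s) (hc : IsCompl (a ⊔ s) c) :
    IsCompl a (b ⊔ c) := by
  have hbs : b ≤ s := hsup ▸ le_sup_right
  have hab : Disjoint a b := by
    rw [disjoint_iff, ← inf_eq_right.mpr hbs, ← inf_assoc]
    exact hdis.eq_bot
  rw [← hsup, ← sup_assoc, sup_inf_self] at hc
  exact hab.isCompl_sup_right_of_isCompl_sup_left hc

open LinearMap Submonoid

section ProjectionMonoid

variable {F V : Type*} [Field F] [AddCommGroup V] [Module F V]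

theorem IsIdempotentElem.sub_apply_mem_ker {p : Module.End F V} (hp : IsIdempotentElem p)
    (v : V) : v - p v ∈ ker p := by
  rw [mem_ker, map_sub, ← Module.End.mul_apply, hp.eq, sub_self]

theorem IsIdempotentElem.apply_mem_of_ker_le_s3 {p : Module.End F V} (hp : IsIdempotentElem p)
    {Y : Submodule F V} (h : ker p ≤ Y) {y : V} (hy : y ∈ Y) : p y ∈ Y := by
  simpa using sub_mem hy (h (hp.sub_apply_mem_ker y))

theorem IsProj1.isIdempotentElem_s3 {p : Module.End F V} (hp : IsProj1 p) : IsIdempotentElem p :=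
  hp.1

theorem IsProj1.ker_not_le_range {p : Module.End F V} (hp : IsProj1 p) : ¬ ker p ≤ range p := by
  intro h
  have hbot : ker p = ⊥ :=
    disjoint_self.mp (hp.isIdempotentElem_s3.isCompl.disjoint.symm.mono_right h)
  have h1 := hp.2
  rw [hbot, finrank_bot] at h1
  exact zero_ne_one h1

theorem IsProj1.ker_mem_kersOf {M : Submonoid (Module.End F V)} {p : Module.End F V}
    (hp : IsProj1 p) (hpM : p ∈ M) : ker p ∈ kersOf M :=
  ⟨p, hpM, hp, rfl⟩

theorem IsProj1.range_mem_imsOf {M : Submonoid (Module.End F V)} {p : Module.End F V}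
    (hp : IsProj1 p) (hpM : p ∈ M) : range p ∈ imsOf M :=
  ⟨p, hpM, hp, rfl⟩

def IsInvariantUnder (M : Submonoid (Module.End F V)) (W : Submodule F V) : Prop :=
  ∀ m ∈ M, ∀ w ∈ W, m w ∈ W

def IsCompleteProjMonoid (M : Submonoid (Module.End F V)) : Prop :=
  ∀ K ∈ kersOf M, ∀ L ∈ imsOf M, ¬ K ≤ L →
    ∃ r ∈ M, r * r = r ∧ LinearMap.ker r = K ∧ LinearMap.range r = L

theorem IsInvariantUnder.inf {M : Submonoid (Module.End F V)} {A B : Submodule F V}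
    (hA : IsInvariantUnder M A) (hB : IsInvariantUnder M B) : IsInvariantUnder M (A ⊓ B) :=
  fun m hm _ hx => ⟨hA m hm _ hx.1, hB m hm _ hx.2⟩

theorem IsInvariantUnder.sup {M : Submonoid (Module.End F V)} {A B : Submodule F V}
    (hA : IsInvariantUnder M A) (hB : IsInvariantUnder M B) : IsInvariantUnder M (A ⊔ B) := by
  intro m hm x hx
  obtain ⟨a, ha, b, hb, rfl⟩ := Submodule.mem_sup.mp hx
  rw [map_add]
  exact add_mem (Submodule.mem_sup_left (hA m hm a ha)) (Submodule.mem_sup_right (hB m hm b hb))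

theorem isInvariantUnder_closure {P : Set (Module.End F V)} {W : Submodule F V}
    (h : ∀ p ∈ P, ∀ w ∈ W, p w ∈ W) : IsInvariantUnder (closure P) W := by
  intro m hm
  induction hm using closure_induction with
  | mem p hp => exact h p hp
  | one => exact fun w hw => hw
  | mul a b _ _ ha hb => exact fun w hw => ha _ (hb w hw)

theorem apply_eq_self_of_mem_closure {P : Set (Module.End F V)} {T : Submodule F V}
    (h : ∀ p ∈ P, ∀ t ∈ T, p t = t) {m : Module.End F V} (hm : m ∈ closure P) {t : V}
    (ht : t ∈ T) : m t = t := by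
  induction hm using closure_induction with
  | mem p hp => exact h p hp t ht
  | one => rfl
  | mul a b _ _ ha hb => rw [Module.End.mul_apply, hb, ha]

theorem isInvariantUnder_sSup_kersOf {P : Set (Module.End F V)} (hP : ∀ p ∈ P, IsProj1 p) :
    IsInvariantUnder (closure P) (sSup (kersOf (closure P))) :=
  isInvariantUnder_closure fun p hp _ => (hP p hp).isIdempotentElem_s3.apply_mem_of_ker_le_s3
    (le_sSup ((hP p hp).ker_mem_kersOf (subset_closure hp)))

theorem apply_eq_self_of_mem_sInf_imsOf {P : Set (Module.End F V)} (hP : ∀ p ∈ P, IsProj1 p)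
    {m : Module.End F V} (hm : m ∈ closure P) {t : V} (ht : t ∈ sInf (imsOf (closure P))) :
    m t = t :=
  apply_eq_self_of_mem_closure (fun p hp _ ht => (hP p hp).isIdempotentElem_s3.mem_range_iff.mp
    (sInf_le ((hP p hp).range_mem_imsOf (subset_closure hp)) ht)) hm ht

theorem isInvariantUnder_of_le_sInf_imsOf {P : Set (Module.End F V)} (hP : ∀ p ∈ P, IsProj1 p)
    {C : Submodule F V} (hC : C ≤ sInf (imsOf (closure P))) : IsInvariantUnder (closure P) C :=
  fun _ hm _ hx => (apply_eq_self_of_mem_sInf_imsOf hP hm (hC hx)).symm ▸ hx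

theorem IsCompleteProjMonoid.ker_le_range {M : Submonoid (Module.End F V)}
    (hM : IsCompleteProjMonoid M) {U K L : Submodule F V} (hU : IsInvariantUnder M U)
    (hK : K ∈ kersOf M) (hL : L ∈ imsOf M)
    (hKU : ¬ K ≤ U) (hUL : ¬ U ≤ L) : K ≤ L := by
  by_contra hKL
  obtain ⟨r, hrM, hr : IsIdempotentElem r, rfl, rfl⟩ := hM K hK L hL hKL
  obtain ⟨u, hu, hur⟩ := SetLike.not_le_iff_exists.mp hUL
  have hz0 : u - r u ≠ 0 := fun h => hur (hr.mem_range_iff.mpr (sub_eq_zero.mp h).symm)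
  obtain ⟨q, -, hq, hqK⟩ := hK
  have hline : ker r = F ∙ (u - r u) :=
    eq_span_singleton_of_mem_of_finrank_eq_one (hqK ▸ hq.2) (hr.sub_apply_mem_ker u) hz0
  exact hKU (hline ▸ (Submodule.span_singleton_le_iff_mem _ _).mpr (sub_mem hu (hU r hrM u hu)))

def kersCompl (M : Submonoid (Module.End F V)) (U : Submodule F V) : Submodule F V :=
  sSup (kersOf M) ⊓ sInf {L | L ∈ imsOf M ∧ ¬ U ≤ L}

section kersCompl

variable {M : Submonoid (Module.End F V)} {U : Submodule F V}

theorem kersCompl_le_sSup : kersCompl M U ≤ sSup (kersOf M) :=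
  inf_le_left

theorem kersCompl_le_of_not_le {L : Submodule F V} (hL : L ∈ imsOf M) (hUL : ¬ U ≤ L) :
    kersCompl M U ≤ L :=
  inf_le_right.trans (sInf_le ⟨hL, hUL⟩)

theorem IsCompleteProjMonoid.ker_le_kersCompl (hM : IsCompleteProjMonoid M)
    (hU : IsInvariantUnder M U) {K : Submodule F V} (hK : K ∈ kersOf M) (hKU : ¬ K ≤ U) :
    K ≤ kersCompl M U :=
  le_inf (le_sSup hK) (le_sInf fun _ hL => hM.ker_le_range hU hK hL.1 hKU hL.2)

theorem disjoint_kersCompl (h : sSup (kersOf M) ⊓ sInf (imsOf M) = ⊥) :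
    Disjoint U (kersCompl M U) := by
  rw [disjoint_iff, eq_bot_iff, ← h]
  refine le_inf (inf_le_right.trans kersCompl_le_sSup) (le_sInf fun L hL => ?_)
  by_cases hUL : U ≤ L
  · exact inf_le_left.trans hUL
  · exact inf_le_right.trans (kersCompl_le_of_not_le hL hUL)

theorem IsCompleteProjMonoid.sup_kersCompl (hM : IsCompleteProjMonoid M)
    (hU : IsInvariantUnder M U) (hUS : U ≤ sSup (kersOf M)) :
    U ⊔ kersCompl M U = sSup (kersOf M) := by
  refine le_antisymm (sup_le hUS kersCompl_le_sSup) (sSup_le fun K hK => ?_)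
  by_cases hKU : K ≤ U
  · exact hKU.trans le_sup_left
  · exact (hM.ker_le_kersCompl hU hK hKU).trans le_sup_right

end kersCompl

theorem IsCompleteProjMonoid.isInvariantUnder_kersCompl {P : Set (Module.End F V)}
    (hP : ∀ p ∈ P, IsProj1 p) (hM : IsCompleteProjMonoid (closure P)) {U : Submodule F V}
    (hU : IsInvariantUnder (closure P) U) :
    IsInvariantUnder (closure P) (kersCompl (closure P) U) := by
  refine isInvariantUnder_closure fun p hp x hx => ?_
  have hpP := hP p hp
  by_cases hUp : U ≤ range p
  · have hK : ker p ≤ kersCompl (closure P) U :=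
      hM.ker_le_kersCompl hU (hpP.ker_mem_kersOf (subset_closure hp))
        fun hKU => hpP.ker_not_le_range (hKU.trans hUp)
    exact hpP.isIdempotentElem_s3.apply_mem_of_ker_le_s3 hK hx
  · have hL := kersCompl_le_of_not_le (hpP.range_mem_imsOf (subset_closure hp)) hUp hx
    rwa [hpP.isIdempotentElem_s3.mem_range_iff.mp hL]

end ProjectionMonoid

theorem stmt_3_general {F V : Type*} [Field F] [AddCommGroup V] [Module F V]
    (M : Submonoid (Module.End F V))
    (hgen : ∃ P : Set (Module.End F V), (∀ p ∈ P, IsProj1 p) ∧ M = Submonoid.closure P)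
    (hST1 : sSup (kersOf M) ⊓ sInf (imsOf M) = ⊥)
    (hST2 : sSup (kersOf M) ⊔ sInf (imsOf M) = ⊤)
    (hcomp : ∀ K ∈ kersOf M, ∀ L ∈ imsOf M, ¬ K ≤ L →
      ∃ r ∈ M, r * r = r ∧ LinearMap.ker r = K ∧ LinearMap.range r = L) :
    ∀ W : Submodule F V, (∀ m ∈ M, ∀ w ∈ W, m w ∈ W) →
      ∃ X : Submodule F V, (∀ m ∈ M, ∀ x ∈ X, m x ∈ X) ∧ W ⊓ X = ⊥ ∧ W ⊔ X = ⊤ := by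
  obtain ⟨P, hP, rfl⟩ := hgen
  intro W hW
  have hcomp : IsCompleteProjMonoid (closure P) := hcomp
  have hU : IsInvariantUnder (closure P) (W ⊓ sSup (kersOf (closure P))) :=
    IsInvariantUnder.inf hW (isInvariantUnder_sSup_kersOf hP)
  obtain ⟨C, hCT, hC⟩ :=
    ((codisjoint_iff.mpr hST2).symm.mono_right (le_sup_right (a := W))).exists_isCompl
  have hX := isCompl_sup_of_inf_sup_eq (disjoint_kersCompl hST1)
    (hcomp.sup_kersCompl hU inf_le_right) hC.symm
  have hXinv := (hcomp.isInvariantUnder_kersCompl hP hU).sup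
    (isInvariantUnder_of_le_sInf_imsOf hP hCT)
  exact ⟨_, hXinv, hX.inf_eq_bot, hX.sup_eq_top⟩

/-- Let `M` be a finite projection monoid, `S` the sum of the kernels
of `M` and `T` the intersection of the images of `M`.  If `V = S ⊕ T` and `M` is
complete, then `M` is completely reducible: every `M`-invariant subspace `W` has an
`M`-invariant complement `X`. -/
theorem stmt_3 {F V : Type*} [Field F] [AddCommGroup V] [Module F V]
    [FiniteDimensional F V]
    (M : Submonoid (Module.End F V))
    (hgen : ∃ P : Set (Module.End F V), (∀ p ∈ P, IsProj1 p) ∧ M = Submonoid.closure P)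
    (hfin : (M : Set (Module.End F V)).Finite)
    (hST1 : sSup (kersOf M) ⊓ sInf (imsOf M) = ⊥)
    (hST2 : sSup (kersOf M) ⊔ sInf (imsOf M) = ⊤)
    (hcomp : ∀ K ∈ kersOf M, ∀ L ∈ imsOf M, ¬ K ≤ L →
      ∃ r ∈ M, r * r = r ∧ LinearMap.ker r = K ∧ LinearMap.range r = L) :
    ∀ W : Submodule F V, (∀ m ∈ M, ∀ w ∈ W, m w ∈ W) →
      ∃ X : Submodule F V, (∀ m ∈ M, ∀ x ∈ X, m x ∈ X) ∧ W ⊓ X = ⊥ ∧ W ⊔ X = ⊤ :=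
  stmt_3_general M hgen hST1 hST2 hcomp
end

section
/- Let n ≥ 3 and let G be a strongly connected directed graph on vertex set {1,...,n} such that for every pair of distinct vertices i, j there is at least one arrow i → j or j → i. If for some pair i, j there are arrows both i → j and j → i, then one of these two arrows can be deleted so that the resulting graph is still strongly connected. -/
/-- Removing one edge `(p,q)`: any walk either avoids the edge, or its suffix after
the last use of the edge gives a walk from `q` avoiding the edge. -/
lemma rtg_remove_tail {α : Type*} (A : α → α → Prop) (p q : α)
    {u v : α} (h : Relation.ReflTransGen A u v) :
    Relation.ReflTransGen (fun a b => A a b ∧ ¬(a = p ∧ b = q)) u v ∨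
      Relation.ReflTransGen (fun a b => A a b ∧ ¬(a = p ∧ b = q)) q v := by
  induction h with
  | refl => exact Or.inl .refl
  | @tail b c hub hbc ih =>
    by_cases hpq : b = p ∧ c = q
    · exact Or.inr (hpq.2 ▸ Relation.ReflTransGen.refl)
    · rcases ih with h' | h'
      · exact Or.inl (h'.tail ⟨hbc, hpq⟩)
      · exact Or.inr (h'.tail ⟨hbc, hpq⟩)

/-- Removing one edge `(p,q)`: any walk either avoids the edge, or its prefix before
the first use of the edge gives a walk to `p` avoiding the edge. -/
lemma rtg_remove_head {α : Type*} (A : α → α → Prop) (p q : α)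
    {u v : α} (h : Relation.ReflTransGen A u v) :
    Relation.ReflTransGen (fun a b => A a b ∧ ¬(a = p ∧ b = q)) u v ∨
      Relation.ReflTransGen (fun a b => A a b ∧ ¬(a = p ∧ b = q)) u p := by
  induction h using Relation.ReflTransGen.head_induction_on with
  | refl => exact Or.inl .refl
  | @head a b hab hbv ih =>
    by_cases hpq : a = p ∧ b = q
    · exact Or.inr (hpq.1 ▸ Relation.ReflTransGen.refl)
    · rcases ih with h' | h'
      · exact Or.inl (Relation.ReflTransGen.head ⟨hab, hpq⟩ h')
      · exact Or.inr (Relation.ReflTransGen.head ⟨hab, hpq⟩ h')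

/-- If after deleting the edge `(p,q)` one can still go from `p` to `q`, then
deleting it preserves strong connectivity. -/
lemma rtg_rebuild {α : Type*} (A : α → α → Prop) (p q : α)
    (hA : ∀ u v, Relation.ReflTransGen A u v)
    (h : Relation.ReflTransGen (fun a b => A a b ∧ ¬(a = p ∧ b = q)) p q) :
    ∀ u v, Relation.ReflTransGen (fun a b => A a b ∧ ¬(a = p ∧ b = q)) u v := by
  intro u v
  rcases rtg_remove_tail A p q (hA u v) with h1 | h1
  · exact h1
  rcases rtg_remove_head A p q (hA u v) with h2 | h2
  · exact h2
  · exact (h2.trans h).trans h1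

/-- Let `n ≥ 3` and `A` a strongly connected directed graph on
`{1,…,n}` with at least one arrow between any two distinct vertices.  If there are
arrows both `i → j` and `j → i` (for `i ≠ j`), then one of these two arrows can be
deleted with the resulting graph still strongly connected. -/
theorem stmt_10 (n : ℕ) (hn : 3 ≤ n) (A : Fin n → Fin n → Prop)
    (htot : ∀ u v : Fin n, u ≠ v → A u v ∨ A v u)
    (hconn : ∀ u v : Fin n, Relation.ReflTransGen A u v)
    (i j : Fin n) (hij : i ≠ j) (hAij : A i j) (hAji : A j i) :
    (∀ u v : Fin n, Relation.ReflTransGen (fun a b => A a b ∧ ¬(a = i ∧ b = j)) u v) ∨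
    (∀ u v : Fin n, Relation.ReflTransGen (fun a b => A a b ∧ ¬(a = j ∧ b = i)) u v) := by
  set A' : Fin n → Fin n → Prop := fun a b => A a b ∧ ¬(a = i ∧ b = j) with hA'
  set A'' : Fin n → Fin n → Prop := fun a b => A a b ∧ ¬(a = j ∧ b = i) with hA''
  by_cases h1 : Relation.ReflTransGen A' i j
  · exact Or.inl (rtg_rebuild A i j hconn h1)
  by_cases h2 : Relation.ReflTransGen A'' j i
  · exact Or.inr (rtg_rebuild A j i hconn h2)
  exfalso
  -- pick a third vertex k ∉ {i, j}
  obtain ⟨k, hki, hkj⟩ : ∃ k : Fin n, k ≠ i ∧ k ≠ j := by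
    by_contra h
    push_neg at h
    have hsub : (Finset.univ : Finset (Fin n)) ⊆ {i, j} := by
      intro x _
      rcases eq_or_ne x i with hx | hx
      · simp [hx]
      · simp [h x hx]
    have := Finset.card_le_card hsub
    have h2le : ({i, j} : Finset (Fin n)).card ≤ 2 := Finset.card_insert_le _ _ |>.trans (by simp)
    simp [Finset.card_univ] at this
    omega
  -- the doubly-reduced relation (both edges removed), in two syntactic forms
  -- R1 := A' minus (j,i),  R2 := A'' minus (i,j)
  -- basic reachability facts in A' and A''
  have hjk' : Relation.ReflTransGen A' j k :=
    (rtg_remove_tail A i j (hconn j k)).elim id id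
  have hki' : Relation.ReflTransGen A' k i :=
    (rtg_remove_head A i j (hconn k i)).elim id id
  have hik'' : Relation.ReflTransGen A'' i k :=
    (rtg_remove_tail A j i (hconn i k)).elim id id
  have hkj'' : Relation.ReflTransGen A'' k j :=
    (rtg_remove_head A j i (hconn k j)).elim id id
  -- now remove the other edge from the A'-walks
  have hP := rtg_remove_tail A' j i hjk'   -- R1 j k ∨ R1 i k
  have hQ := rtg_remove_head A' j i hki'   -- R1 k i ∨ R1 k j
  -- maps from R1 into A' and A''
  have m1 : ∀ a b : Fin n, (fun a b => A' a b ∧ ¬(a = j ∧ b = i)) a b → A' a b :=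
    fun a b h => h.1
  have m2 : ∀ a b : Fin n, (fun a b => A' a b ∧ ¬(a = j ∧ b = i)) a b → A'' a b :=
    fun a b h => ⟨h.1.1, h.2⟩
  -- edges between k and the pair {i,j}, as R1-edges when present
  have eik : A i k → (fun a b => A' a b ∧ ¬(a = j ∧ b = i)) i k := by
    intro h; exact ⟨⟨h, fun hc => hkj hc.2⟩, fun hc => hij hc.1⟩
  have eki : A k i → (fun a b => A' a b ∧ ¬(a = j ∧ b = i)) k i := by
    intro h; exact ⟨⟨h, fun hc => hki hc.1⟩, fun hc => hkj hc.1⟩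
  have ejk : A j k → (fun a b => A' a b ∧ ¬(a = j ∧ b = i)) j k := by
    intro h; exact ⟨⟨h, fun hc => hij hc.1.symm⟩, fun hc => hki hc.2⟩
  have ekj : A k j → (fun a b => A' a b ∧ ¬(a = j ∧ b = i)) k j := by
    intro h; exact ⟨⟨h, fun hc => hki hc.1⟩, fun hc => hkj hc.1⟩
  -- contradiction helpers: an R1-walk from i to j contradicts h1,
  -- an R1-walk from j to i contradicts h2
  have c1 : ¬ Relation.ReflTransGen (fun a b => A' a b ∧ ¬(a = j ∧ b = i)) i j :=
    fun h => h1 (Relation.ReflTransGen.mono m1 i j h)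
  have c2 : ¬ Relation.ReflTransGen (fun a b => A' a b ∧ ¬(a = j ∧ b = i)) j i :=
    fun h => h2 (Relation.ReflTransGen.mono m2 j i h)
  rcases hP with hP | hP <;> rcases hQ with hQ | hQ
  · exact c2 (hP.trans hQ)
  · -- j ⇝ k ⇝ j ; use totality between i and k
    rcases htot i k (fun h => hki h.symm) with h | h
    · exact c1 ((Relation.ReflTransGen.head (eik h) hQ))
    · exact c2 (hP.trans (Relation.ReflTransGen.tail (Relation.ReflTransGen.refl) (eki h)))
  · -- i ⇝ k ⇝ i ; use totality between j and k
    rcases htot j k (fun h => hkj h.symm) with h | h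
    · exact c2 ((Relation.ReflTransGen.head (ejk h) hQ))
    · exact c1 (hP.trans (Relation.ReflTransGen.tail (Relation.ReflTransGen.refl) (ekj h)))
  · exact c1 (hP.trans hQ)
end

section
/- Let M be a finite monoid of linear endomorphisms of ℂ² generated by rank-1 idempotents. If p, q ∈ M are non-identity elements with im(p) ≠ ker(q), then Tr(pq) is either zero or a root of unity. -/
/-!
A non-identity element of `M` is a product in which some rank-one generator occurs, so it is
singular; hence `x = p * q` is singular and Cayley–Hamilton gives `x * x = Tr x • x`, so
`x ^ (n + 1) = (Tr x) ^ n • x` and `Tr (x ^ (n + 1)) = (Tr x) ^ (n + 1)`. These traces all lie in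
the finite set `Tr '' M`, so two distinct powers of `Tr x` coincide, and a nonzero `Tr x` is a
root of unity.
-/

/-- A projection on `ℂ²`: an idempotent linear endomorphism of rank 1. -/
def IsProj2 (p : Module.End ℂ (Fin 2 → ℂ)) : Prop :=
  p * p = p ∧ Module.finrank ℂ (LinearMap.range p) = 1

open Module

theorem LinearMap.mul_self_eq_trace_smul_sub_det_smul {R M : Type*} [CommRing R] [Nontrivial R]
    [AddCommGroup M] [Module R M] [Module.Free R M] [Module.Finite R M] (h2 : finrank R M = 2)
    (f : Module.End R M) : f * f = trace R M f • f - LinearMap.det f • 1 := by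
  have hf := aeval_self_charpoly f
  rw [← charpoly_toMatrix f (finBasisOfFinrankEq R M h2),
    Matrix.charpoly_of_card_eq_two _ (Fintype.card_fin 2), det_toMatrix,
    ← trace_eq_matrix_trace] at hf
  simp only [map_add, map_sub, map_mul, map_pow, Polynomial.aeval_X, Polynomial.aeval_C,
    Algebra.algebraMap_eq_smul_one, smul_mul_assoc, one_mul] at hf
  rw [← sq, ← sub_eq_zero, ← hf]
  abel

theorem LinearMap.mul_self_eq_trace_smul_of_det_eq_zero {R M : Type*} [CommRing R] [Nontrivial R]
    [AddCommGroup M] [Module R M] [Module.Free R M] [Module.Finite R M] (h2 : finrank R M = 2)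
    {f : Module.End R M} (hf : LinearMap.det f = 0) : f * f = trace R M f • f := by
  rw [mul_self_eq_trace_smul_sub_det_smul h2, hf, zero_smul, sub_zero]

theorem pow_succ_eq_pow_smul_of_mul_self_eq_smul {R A : Type*} [Monoid R] [Monoid A]
    [MulAction R A] [IsScalarTower R A A] {x : A} {c : R} (hx : x * x = c • x) (n : ℕ) :
    x ^ (n + 1) = c ^ n • x := by
  induction n with
  | zero => simp
  | succ n ih => rw [pow_succ, ih, smul_mul_assoc, hx, smul_smul, ← pow_succ]

theorem exists_pow_eq_one_of_forall_pow_succ_mem {M₀ : Type*} [MonoidWithZero M₀]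
    [IsLeftCancelMulZero M₀] {t : M₀} (ht : t ≠ 0) {s : Set M₀} (hs : s.Finite)
    (hts : ∀ n : ℕ, t ^ (n + 1) ∈ s) :
    ∃ k, 0 < k ∧ t ^ k = 1 := by
  obtain ⟨m, n, hmn, hpow⟩ := hs.exists_lt_map_eq_of_forall_mem hts
  refine ⟨n - m, by omega, mul_left_cancel₀ (pow_ne_zero (m + 1) ht) ?_⟩
  rw [← pow_add, mul_one, hpow]
  congr 1
  omega

theorem Submonoid.eq_one_or_map_eq_zero_of_mem_closure {M M₀ : Type*} [Monoid M]
    [MonoidWithZero M₀] (f : M →* M₀) {S : Set M} (hS : ∀ s ∈ S, f s = 0) {x : M}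
    (hx : x ∈ closure S) :
    x = 1 ∨ f x = 0 := by
  induction hx using closure_induction with
  | mem s hs => exact Or.inr (hS s hs)
  | one => exact Or.inl rfl
  | mul a b _ _ ha hb =>
    rcases ha with rfl | ha
    · simpa using hb
    · exact Or.inr (by rw [map_mul, ha, zero_mul])

theorem LinearMap.det_eq_zero_of_finrank_range_lt {K V : Type*} [Field K] [AddCommGroup V]
    [Module K V] [FiniteDimensional K V] (f : Module.End K V)
    (hf : finrank K (range f) < finrank K V) : LinearMap.det f = 0 := by
  rw [det_eq_zero_iff_ker_ne_bot, Ne, ← Submodule.finrank_eq_zero]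
  have := finrank_range_add_finrank_ker f
  omega

theorem stmt_12_general (M : Submonoid (Module.End ℂ (Fin 2 → ℂ)))
    (hfin : (M : Set (Module.End ℂ (Fin 2 → ℂ))).Finite)
    (hgen : ∃ P : Set (Module.End ℂ (Fin 2 → ℂ)),
      (∀ p ∈ P, IsProj2 p) ∧ M = Submonoid.closure P)
    (p q : Module.End ℂ (Fin 2 → ℂ)) (hp : p ∈ M) (hq : q ∈ M)
    (hp1 : p ≠ 1) :
    LinearMap.trace ℂ (Fin 2 → ℂ) (p * q) = 0 ∨
    ∃ k : ℕ, 0 < k ∧ (LinearMap.trace ℂ (Fin 2 → ℂ) (p * q)) ^ k = 1 := by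
  obtain ⟨P, hP, rfl⟩ := hgen
  have hP_det : ∀ s ∈ P, LinearMap.det s = 0 := fun s hs =>
    s.det_eq_zero_of_finrank_range_lt (by rw [(hP s hs).2, finrank_fin_fun]; norm_num)
  have hp_det : LinearMap.det p = 0 :=
    (Submonoid.eq_one_or_map_eq_zero_of_mem_closure _ hP_det hp).resolve_left hp1
  have hsq : p * q * (p * q) = LinearMap.trace ℂ _ (p * q) • (p * q) :=
    LinearMap.mul_self_eq_trace_smul_of_det_eq_zero (finrank_fin_fun ℂ)
      (by rw [map_mul, hp_det, zero_mul])
  refine or_iff_not_imp_left.2 fun ht => exists_pow_eq_one_of_forall_pow_succ_mem ht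
    (hfin.image (LinearMap.trace ℂ _)) fun n =>
      ⟨(p * q) ^ (n + 1), pow_mem (mul_mem hp hq) _, ?_⟩
  rw [pow_succ_eq_pow_smul_of_mul_self_eq_smul hsq, map_smul, smul_eq_mul, ← pow_succ]

/-- Let `M` be a finite monoid of endomorphisms of `ℂ²` generated by
rank-1 idempotents.  If `p, q ∈ M` are non-identity elements with `im p ≠ ker q`, then
`Tr(pq)` is zero or a root of unity. -/
theorem stmt_12 (M : Submonoid (Module.End ℂ (Fin 2 → ℂ)))
    (hfin : (M : Set (Module.End ℂ (Fin 2 → ℂ))).Finite)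
    (hgen : ∃ P : Set (Module.End ℂ (Fin 2 → ℂ)),
      (∀ p ∈ P, IsProj2 p) ∧ M = Submonoid.closure P)
    (p q : Module.End ℂ (Fin 2 → ℂ)) (hp : p ∈ M) (hq : q ∈ M)
    (hp1 : p ≠ 1) (hq1 : q ≠ 1)
    (h : LinearMap.range p ≠ LinearMap.ker q) :
    LinearMap.trace ℂ (Fin 2 → ℂ) (p * q) = 0 ∨
    ∃ k : ℕ, 0 < k ∧ (LinearMap.trace ℂ (Fin 2 → ℂ) (p * q)) ^ k = 1 :=
  stmt_12_general M hfin hgen p q hp hq hp1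
end

section
/- Suppose M is a finite monoid of linear endomorphisms of ℂ² generated by rank-1 idempotents, and that the lines spanned by (1,0), (0,1), (1,-1) are distinct kernels of M while the lines spanned by (x,1), (y,1), (z,1) are distinct images of M, with x,y,z ∉ {0,-1} pairwise distinct. Then this yields a contradiction: no such finite M exists. Equivalently, three distinct kernels and three distinct images of a finite projection monoid on ℂ² cannot be six pairwise distinct lines. -/
/-- `K` is a kernel of `M`. -/
def IsKer (M : Submonoid (Module.End ℂ (Fin 2 → ℂ)))
    (K : Submodule ℂ (Fin 2 → ℂ)) : Prop :=
  ∃ p ∈ M, IsProj2 p ∧ LinearMap.ker p = K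

/-- `L` is an image of `M`. -/
def IsIm (M : Submonoid (Module.End ℂ (Fin 2 → ℂ)))
    (L : Submodule ℂ (Fin 2 → ℂ)) : Prop :=
  ∃ p ∈ M, IsProj2 p ∧ LinearMap.range p = L

/-- `M` is complete: for every kernel `K` and image `L` of `M` with `K ≠ L`, the
projection with kernel `K` and image `L` lies in `M`. -/
def PrjComplete (M : Submonoid (Module.End ℂ (Fin 2 → ℂ))) : Prop :=
  ∀ K L : Submodule ℂ (Fin 2 → ℂ), IsKer M K → IsIm M L → K ≠ L →
    ∃ p ∈ M, p * p = p ∧ LinearMap.ker p = K ∧ LinearMap.range p = L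

/-- rank-one map `w ↦ (c * ⟨r, w⟩) • u`. -/
noncomputable def rk1 (c : ℂ) (u r : Fin 2 → ℂ) : Module.End ℂ (Fin 2 → ℂ) where
  toFun w := (c * (r 0 * w 0 + r 1 * w 1)) • u
  map_add' a b := by
    simp only [Pi.add_apply]
    rw [← add_smul]
    congr 1
    ring
  map_smul' t a := by
    simp only [Pi.smul_apply, smul_eq_mul, RingHom.id_apply]
    rw [smul_smul]
    congr 1
    ring

lemma rk1_apply (c : ℂ) (u r w : Fin 2 → ℂ) :
    rk1 c u r w = (c * (r 0 * w 0 + r 1 * w 1)) • u := rfl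

lemma rk1_mul (c c' : ℂ) (u r u' r' : Fin 2 → ℂ) :
    rk1 c u r * rk1 c' u' r' =
      rk1 (c * c' * (r 0 * u' 0 + r 1 * u' 1)) u r' := by
  apply LinearMap.ext
  intro w
  simp only [Module.End.mul_apply, rk1_apply, Pi.smul_apply, smul_eq_mul]
  congr 1
  ring

lemma rk1_smul (lam c : ℂ) (u r : Fin 2 → ℂ) :
    lam • rk1 c u r = rk1 (lam * c) u r := by
  apply LinearMap.ext
  intro w
  simp only [LinearMap.smul_apply, rk1_apply, smul_smul]
  congr 1
  ring

lemma span_pair_top (k u : Fin 2 → ℂ) (hdet : k 0 * u 1 - k 1 * u 0 ≠ 0) :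
    Submodule.span ℂ {k, u} = ⊤ := by
  rw [eq_top_iff]
  rintro w -
  rw [Submodule.mem_span_pair]
  refine ⟨(w 0 * u 1 - w 1 * u 0) / (k 0 * u 1 - k 1 * u 0),
    (k 0 * w 1 - k 1 * w 0) / (k 0 * u 1 - k 1 * u 0), ?_⟩
  funext i
  fin_cases i <;>
    · simp only [Fin.zero_eta, Fin.mk_one, Pi.add_apply, Pi.smul_apply, smul_eq_mul]
      rw [div_mul_eq_mul_div, div_mul_eq_mul_div, ← add_div, div_eq_iff hdet]
      ring

lemma span_ne (k u : Fin 2 → ℂ) (hdet : k 0 * u 1 - k 1 * u 0 ≠ 0) :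
    Submodule.span ℂ {k} ≠ Submodule.span ℂ {u} := by
  intro h
  have hu : u ∈ Submodule.span ℂ {k} := by
    rw [h]; exact Submodule.mem_span_singleton_self u
  rw [Submodule.mem_span_singleton] at hu
  obtain ⟨c, hc⟩ := hu
  apply hdet
  rw [← hc]
  simp only [Pi.smul_apply, smul_eq_mul]
  ring

lemma proj_eq (p : Module.End ℂ (Fin 2 → ℂ)) (hp : p * p = p)
    (k u r : Fin 2 → ℂ)
    (hker : LinearMap.ker p = Submodule.span ℂ {k})
    (hrange : LinearMap.range p = Submodule.span ℂ {u})
    (hrk : r 0 * k 0 + r 1 * k 1 = 0)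
    (hru : r 0 * u 0 + r 1 * u 1 ≠ 0)
    (hdet : k 0 * u 1 - k 1 * u 0 ≠ 0) :
    p = rk1 (r 0 * u 0 + r 1 * u 1)⁻¹ u r := by
  apply LinearMap.ext_on (span_pair_top k u hdet)
  intro v hv
  obtain h | h := hv <;> rw [show v = _ from h]
  · have hk0 : p k = 0 := by
      have : k ∈ LinearMap.ker p := by
        rw [hker]; exact Submodule.mem_span_singleton_self k
      exact this
    rw [hk0, rk1_apply, hrk, mul_zero, zero_smul]
  · have hu1 : p u = u := by
      have : u ∈ LinearMap.range p := by
        rw [hrange]; exact Submodule.mem_span_singleton_self u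
      obtain ⟨w, hw⟩ := this
      have := congrArg (fun f => f w) hp
      simp only [Module.End.mul_apply] at this
      rw [hw] at this
      exact this
    rw [hu1, rk1_apply, inv_mul_cancel₀ hru, one_smul]

lemma key_abs (M : Submonoid (Module.End ℂ (Fin 2 → ℂ)))
    (hfin : (M : Set (Module.End ℂ (Fin 2 → ℂ))).Finite)
    (s : Module.End ℂ (Fin 2 → ℂ)) (hs : s ∈ M) (hsne : s ≠ 0)
    (lam : ℂ) (hlam : lam ≠ 0) (h2 : s * s = lam • s) :
    ‖lam‖ = 1 := by
  have hpow : ∀ n : ℕ, s ^ (n + 1) = lam ^ n • s := by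
    intro n
    induction n with
    | zero => simp
    | succ n ih =>
        rw [pow_succ, ih, smul_mul_assoc, h2, smul_smul, pow_succ]
  have hrange : Set.range (fun n : ℕ => lam ^ n • s) ⊆ (M : Set _) := by
    rintro _ ⟨n, rfl⟩
    have := pow_mem hs (n + 1)
    rwa [hpow n] at this
  have hninj : ¬ Function.Injective (fun n : ℕ => lam ^ n • s) := by
    intro hinj
    exact Set.infinite_range_of_injective hinj (hfin.subset hrange)
  rw [Function.not_injective_iff] at hninj
  obtain ⟨a, b, hab, hne⟩ := hninj
  have hl : lam ^ a = lam ^ b := by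
    exact smul_left_injective ℂ hsne hab
  have habs : ‖lam‖ ^ a = ‖lam‖ ^ b := by
    rw [← norm_pow, ← norm_pow, hl]
  have hpos : 0 < ‖lam‖ := norm_pos_iff.mpr hlam
  have hlog : (a : ℝ) * Real.log (‖lam‖) =
      (b : ℝ) * Real.log (‖lam‖) := by
    rw [← Real.log_pow, ← Real.log_pow, habs]
  have hlog0 : Real.log (‖lam‖) = 0 := by
    by_contra h
    exact hne (Nat.cast_injective (mul_right_cancel₀ h hlog))
  rcases Real.log_eq_zero.mp hlog0 with h | h | h
  · exact absurd h (ne_of_gt hpos)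
  · exact h
  · linarith

lemma abs_eq_one (M : Submonoid (Module.End ℂ (Fin 2 → ℂ)))
    (hfin : (M : Set (Module.End ℂ (Fin 2 → ℂ))).Finite)
    (lam x : ℂ) (hlam : lam ≠ 0)
    (hmem : rk1 lam ![x, 1] ![0, 1] ∈ M) :
    ‖lam‖ = 1 := by
  have hne : rk1 lam ![x, 1] ![0, 1] ≠ 0 := by
    intro h
    have h1 : rk1 lam ![x, 1] ![0, 1] ![0, 1] = 0 := by rw [h]; rfl
    have h2 : (rk1 lam ![x, 1] ![0, 1] ![0, 1]) 1 = lam := by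
      simp [rk1_apply]
    rw [h1] at h2
    exact hlam h2.symm
  have hmul : rk1 lam ![x, 1] ![0, 1] * rk1 lam ![x, 1] ![0, 1]
      = lam • rk1 lam ![x, 1] ![0, 1] := by
    rw [rk1_mul, rk1_smul]
    congr 1
    norm_num
  exact key_abs M hfin _ hmem hne lam hlam hmul

lemma circle_two (x y : ℂ) (h1 : ‖y‖ = ‖x‖)
    (h2 : ‖y + 1‖ = ‖x + 1‖) (hne : y ≠ x) :
    y = (starRingEnd ℂ) x := by
  have n1 : Complex.normSq y = Complex.normSq x := by
    rw [← Complex.sq_norm, ← Complex.sq_norm, h1]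
  have n2 : Complex.normSq (y + 1) = Complex.normSq (x + 1) := by
    rw [← Complex.sq_norm, ← Complex.sq_norm, h2]
  have hre : y.re = x.re := by
    simp only [Complex.normSq_apply, Complex.add_re, Complex.add_im,
      Complex.one_re, Complex.one_im] at n1 n2
    nlinarith [n1, n2]
  have hc1 : y * (starRingEnd ℂ) y = x * (starRingEnd ℂ) x := by
    rw [Complex.mul_conj, Complex.mul_conj, n1]
  have hc2 : y + (starRingEnd ℂ) y = x + (starRingEnd ℂ) x := by
    rw [Complex.add_conj, Complex.add_conj, hre]
  have key : (y - x) * (y - (starRingEnd ℂ) x) = 0 := by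
    linear_combination y * hc2 - hc1
  rcases mul_eq_zero.mp key with h | h
  · exact absurd (sub_eq_zero.mp h) hne
  · exact sub_eq_zero.mp h

lemma pair_abs (M : Submonoid (Module.End ℂ (Fin 2 → ℂ)))
    (hfin : (M : Set (Module.End ℂ (Fin 2 → ℂ))).Finite)
    (hcomp : PrjComplete M) (x a : ℂ)
    (hx0 : x ≠ 0) (hx1 : x + 1 ≠ 0) (ha0 : a ≠ 0) (ha1 : a + 1 ≠ 0)
    (hK1 : IsKer M (Submodule.span ℂ {![(1 : ℂ), 0]}))
    (hK2 : IsKer M (Submodule.span ℂ {![(0 : ℂ), 1]}))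
    (hK3 : IsKer M (Submodule.span ℂ {![(1 : ℂ), -1]}))
    (hLx : IsIm M (Submodule.span ℂ {![x, 1]}))
    (hLa : IsIm M (Submodule.span ℂ {![a, 1]})) :
    ‖a‖ = ‖x‖ ∧
      ‖a + 1‖ = ‖x + 1‖ := by
  have habsx : ‖x‖ ≠ 0 := by simpa using hx0
  have habsx1 : ‖x + 1‖ ≠ 0 := by simpa using hx1
  -- determinant facts
  have det2x : (![(0:ℂ),1]) 0 * (![x,1]) 1 - (![(0:ℂ),1]) 1 * (![x,1]) 0 ≠ 0 := by
    simp only [Matrix.cons_val_zero, Matrix.cons_val_one, Matrix.head_cons]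
    intro h; apply hx0; linear_combination -h
  have det3x : (![(1:ℂ),-1]) 0 * (![x,1]) 1 - (![(1:ℂ),-1]) 1 * (![x,1]) 0 ≠ 0 := by
    simp only [Matrix.cons_val_zero, Matrix.cons_val_one, Matrix.head_cons]
    intro h; apply hx1; linear_combination h
  have det1a : (![(1:ℂ),0]) 0 * (![a,1]) 1 - (![(1:ℂ),0]) 1 * (![a,1]) 0 ≠ 0 := by
    simp only [Matrix.cons_val_zero, Matrix.cons_val_one, Matrix.head_cons]
    norm_num
  -- the three projections
  obtain ⟨p2, hp2M, hp2p, hp2ker, hp2range⟩ :=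
    hcomp _ _ hK2 hLx (span_ne _ _ det2x)
  obtain ⟨p3, hp3M, hp3p, hp3ker, hp3range⟩ :=
    hcomp _ _ hK3 hLx (span_ne _ _ det3x)
  obtain ⟨q, hqM, hqp, hqker, hqrange⟩ :=
    hcomp _ _ hK1 hLa (span_ne _ _ det1a)
  have hp2 : p2 = rk1 ((![(1:ℂ),0]) 0 * (![x,1]) 0 + (![(1:ℂ),0]) 1 * (![x,1]) 1)⁻¹
      ![x,1] ![(1:ℂ),0] := by
    apply proj_eq p2 hp2p ![(0:ℂ),1] ![x,1] ![(1:ℂ),0] hp2ker hp2range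
    · simp
    · simpa using hx0
    · exact det2x
  have hp3 : p3 = rk1 ((![(1:ℂ),1]) 0 * (![x,1]) 0 + (![(1:ℂ),1]) 1 * (![x,1]) 1)⁻¹
      ![x,1] ![(1:ℂ),1] := by
    apply proj_eq p3 hp3p ![(1:ℂ),-1] ![x,1] ![(1:ℂ),1] hp3ker hp3range
    · simp
    · simpa using hx1
    · exact det3x
  have hq : q = rk1 ((![(0:ℂ),1]) 0 * (![a,1]) 0 + (![(0:ℂ),1]) 1 * (![a,1]) 1)⁻¹
      ![a,1] ![(0:ℂ),1] := by
    apply proj_eq q hqp ![(1:ℂ),0] ![a,1] ![(0:ℂ),1] hqker hqrange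
    · simp
    · simp
    · exact det1a
  -- products
  have hs1 : p2 * q = rk1 (a * x⁻¹) ![x,1] ![(0:ℂ),1] := by
    rw [hp2, hq, rk1_mul]
    congr 1
    simp only [Matrix.cons_val_zero, Matrix.cons_val_one, Matrix.head_cons]
    field_simp
    simp [hx0]
  have hs2 : p3 * q = rk1 ((a + 1) * (x + 1)⁻¹) ![x,1] ![(0:ℂ),1] := by
    rw [hp3, hq, rk1_mul]
    congr 1
    simp only [Matrix.cons_val_zero, Matrix.cons_val_one, Matrix.head_cons]
    field_simp
    simp
  have h1 : ‖a * x⁻¹‖ = 1 := by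
    apply abs_eq_one M hfin _ x (mul_ne_zero ha0 (inv_ne_zero hx0))
    rw [← hs1]; exact mul_mem hp2M hqM
  have h2 : ‖(a + 1) * (x + 1)⁻¹‖ = 1 := by
    apply abs_eq_one M hfin _ x (mul_ne_zero ha1 (inv_ne_zero hx1))
    rw [← hs2]; exact mul_mem hp3M hqM
  rw [norm_mul, norm_inv, mul_inv_eq_one₀ habsx] at h1
  rw [norm_mul, norm_inv, mul_inv_eq_one₀ habsx1] at h2
  exact ⟨h1, h2⟩
/-- A finite complete projection monoid `M` on `ℂ²` cannot have the
three distinct kernels `⟨(1,0)⟩, ⟨(0,1)⟩, ⟨(1,−1)⟩` and three distinct images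
`⟨(x,1)⟩, ⟨(y,1)⟩, ⟨(z,1)⟩` with `x, y, z ∉ {0, −1}` pairwise distinct: three kernels
and three images can never be six pairwise distinct lines. -/
theorem stmt_13 (M : Submonoid (Module.End ℂ (Fin 2 → ℂ)))
    (hfin : (M : Set (Module.End ℂ (Fin 2 → ℂ))).Finite)
    (hgen : ∃ P : Set (Module.End ℂ (Fin 2 → ℂ)),
      (∀ p ∈ P, IsProj2 p) ∧ M = Submonoid.closure P)
    (hcomp : PrjComplete M)
    (x y z : ℂ) (hxy : x ≠ y) (hxz : x ≠ z) (hyz : y ≠ z)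
    (hx0 : x ≠ 0) (hx1 : x ≠ -1) (hy0 : y ≠ 0) (hy1 : y ≠ -1)
    (hz0 : z ≠ 0) (hz1 : z ≠ -1)
    (hK1 : IsKer M (Submodule.span ℂ {![(1 : ℂ), 0]}))
    (hK2 : IsKer M (Submodule.span ℂ {![(0 : ℂ), 1]}))
    (hK3 : IsKer M (Submodule.span ℂ {![(1 : ℂ), -1]}))
    (hL1 : IsIm M (Submodule.span ℂ {![x, 1]}))
    (hL2 : IsIm M (Submodule.span ℂ {![y, 1]}))
    (hL3 : IsIm M (Submodule.span ℂ {![z, 1]})) :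
    False := by

  have hx1' : x + 1 ≠ 0 := fun h => hx1 (by linear_combination h)
  have hy1' : y + 1 ≠ 0 := fun h => hy1 (by linear_combination h)
  have hz1' : z + 1 ≠ 0 := fun h => hz1 (by linear_combination h)
  obtain ⟨hy_abs, hy1_abs⟩ :=
    pair_abs M hfin hcomp x y hx0 hx1' hy0 hy1' hK1 hK2 hK3 hL1 hL2
  obtain ⟨hz_abs, hz1_abs⟩ :=
    pair_abs M hfin hcomp x z hx0 hx1' hz0 hz1' hK1 hK2 hK3 hL1 hL3
  have hy_conj : y = (starRingEnd ℂ) x :=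
    circle_two x y hy_abs hy1_abs (Ne.symm hxy)
  have hz_conj : z = (starRingEnd ℂ) x :=
    circle_two x z hz_abs hz1_abs (Ne.symm hxz)
  exact hyz (hy_conj.trans hz_conj.symm)
end

section
/- Let M be a finite monoid of linear endomorphisms of ℂ², complete and generated by rank-1 idempotents, such that ⟨(1,0)⟩ and ⟨(0,1)⟩ are both kernels and images of M, and ⟨(-1,1)⟩ is a kernel of M. If ⟨(x,1)⟩ is an image of M with x ≠ 0, −1, then x is a primitive cube root of unity. -/
section StmtAux

private lemma stmt15_fix_of_range {p : Module.End ℂ (Fin 2 → ℂ)} (hp : p * p = p)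
    {v : Fin 2 → ℂ} (hv : v ∈ LinearMap.range p) : p v = v := by
  obtain ⟨u, rfl⟩ := hv
  have := LinearMap.congr_fun hp u
  rwa [Module.End.mul_apply] at this

private lemma stmt15_abs_one (M : Submonoid (Module.End ℂ (Fin 2 → ℂ)))
    (hfin : (M : Set (Module.End ℂ (Fin 2 → ℂ))).Finite)
    {a : Module.End ℂ (Fin 2 → ℂ)} (haM : a ∈ M) {c : ℂ} (hc : c ≠ 0)
    (ha0 : a ≠ 0) (hsq : a * a = c • a) : ‖c‖ = 1 := by
  have hpow : ∀ n : ℕ, a ^ (n + 1) = c ^ n • a := by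
    intro n
    induction n with
    | zero => simp
    | succ n ih =>
      rw [pow_succ, ih, smul_mul_assoc, hsq, smul_smul, ← pow_succ]
  have : Finite M := hfin.to_subtype
  obtain ⟨m, n, hmn, heq⟩ :=
    Finite.exists_ne_map_eq_of_infinite (fun n : ℕ => (⟨a ^ (n + 1), pow_mem haM _⟩ : M))
  have heq' : c ^ m = c ^ n := by
    have h := congrArg (Subtype.val) heq
    simp only [hpow] at h
    exact smul_left_injective ℂ ha0 h
  have key : ∀ i j : ℕ, i < j → c ^ i = c ^ j → ‖c‖ = 1 := by
    intro i j hij h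
    have h2 : c ^ (j - i) = 1 := by
      have : c ^ i * c ^ (j - i) = c ^ i * 1 := by
        rw [mul_one, ← pow_add, h]
        congr 1
        omega
      exact mul_left_cancel₀ (pow_ne_zero _ hc) this
    have h3 : ‖c‖ ^ (j - i) = 1 := by
      rw [← norm_pow, h2, norm_one]
    have hj : j - i ≠ 0 := by omega
    have hnn := norm_nonneg c
    rcases lt_trichotomy ‖c‖ 1 with h4 | h4 | h4
    · exfalso
      have := pow_lt_one₀ hnn h4 hj
      rw [h3] at this; exact lt_irrefl _ this
    · exact h4
    · exfalso
      have := one_lt_pow₀ h4 hj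
      rw [h3] at this; exact lt_irrefl _ this
  rcases hmn.lt_or_gt with h | h
  · exact key _ _ h heq'
  · exact key _ _ h heq'.symm

end StmtAux

/-- Let `M` be a finite complete projection monoid on `ℂ²` such that
`⟨(1,0)⟩` and `⟨(0,1)⟩` are both kernels and images of `M`, and `⟨(−1,1)⟩` is a kernel
of `M`.  If `⟨(x,1)⟩` is an image of `M` with `x ≠ 0, −1`, then `x` is a primitive cube
root of unity. -/
theorem stmt_15 (M : Submonoid (Module.End ℂ (Fin 2 → ℂ)))
    (hfin : (M : Set (Module.End ℂ (Fin 2 → ℂ))).Finite)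
    (hgen : ∃ P : Set (Module.End ℂ (Fin 2 → ℂ)),
      (∀ p ∈ P, IsProj2 p) ∧ M = Submonoid.closure P)
    (hcomp : PrjComplete M)
    (hK1 : IsKer M (Submodule.span ℂ {![(1 : ℂ), 0]}))
    (hK2 : IsKer M (Submodule.span ℂ {![(0 : ℂ), 1]}))
    (hI1 : IsIm M (Submodule.span ℂ {![(1 : ℂ), 0]}))
    (hI2 : IsIm M (Submodule.span ℂ {![(0 : ℂ), 1]}))
    (hK3 : IsKer M (Submodule.span ℂ {![(-1 : ℂ), 1]}))
    (x : ℂ) (hx0 : x ≠ 0) (hx1 : x ≠ -1)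
    (hIx : IsIm M (Submodule.span ℂ {![x, 1]})) :
    x ^ 3 = 1 ∧ x ≠ 1 := by
  -- decomposition identities
  have hd1 : (![(0:ℂ),1] : Fin 2 → ℂ) = (-x) • ![(1:ℂ),0] + ![x,1] := by
    funext i; fin_cases i <;> simp
  have hd2 : (![(1:ℂ),0] : Fin 2 → ℂ) = x⁻¹ • ![x,1] + (-x⁻¹) • ![(0:ℂ),1] := by
    funext i; fin_cases i <;> simp; field_simp
  have hd3 : ∀ u : Fin 2 → ℂ, u = (-(u 0)) • ![(-1:ℂ),1] + (u 0 + u 1) • ![(0:ℂ),1] := by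
    intro u; funext i; fin_cases i <;> simp
  have hd4 : ∀ u : Fin 2 → ℂ, u = (u 1) • ![(-1:ℂ),1] + (u 0 + u 1) • ![(1:ℂ),0] := by
    intro u; funext i; fin_cases i <;> simp
  -- span inequalities
  have hne1 : Submodule.span ℂ {![(1:ℂ),0]} ≠ Submodule.span ℂ {![x,1]} := by
    intro h
    have : (![x,1] : Fin 2 → ℂ) ∈ Submodule.span ℂ {![(1:ℂ),0]} :=
      h ▸ Submodule.mem_span_singleton_self _
    obtain ⟨c, hc⟩ := Submodule.mem_span_singleton.mp this
    have := congrFun hc 1; simp at this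
  have hne2 : Submodule.span ℂ {![(0:ℂ),1]} ≠ Submodule.span ℂ {![x,1]} := by
    intro h
    have : (![x,1] : Fin 2 → ℂ) ∈ Submodule.span ℂ {![(0:ℂ),1]} :=
      h ▸ Submodule.mem_span_singleton_self _
    obtain ⟨c, hc⟩ := Submodule.mem_span_singleton.mp this
    have := congrFun hc 0; simp at this
    exact hx0 this.symm
  have hne3 : Submodule.span ℂ {![(-1:ℂ),1]} ≠ Submodule.span ℂ {![(0:ℂ),1]} := by
    intro h
    have : (![(0:ℂ),1] : Fin 2 → ℂ) ∈ Submodule.span ℂ {![(-1:ℂ),1]} :=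
      h.symm ▸ Submodule.mem_span_singleton_self _
    obtain ⟨c, hc⟩ := Submodule.mem_span_singleton.mp this
    have h0 := congrFun hc 0; have h1 := congrFun hc 1
    simp at h0 h1
    rw [h0] at h1; simp at h1
  have hne4 : Submodule.span ℂ {![(-1:ℂ),1]} ≠ Submodule.span ℂ {![(1:ℂ),0]} := by
    intro h
    have : (![(1:ℂ),0] : Fin 2 → ℂ) ∈ Submodule.span ℂ {![(-1:ℂ),1]} :=
      h.symm ▸ Submodule.mem_span_singleton_self _
    obtain ⟨c, hc⟩ := Submodule.mem_span_singleton.mp this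
    have h0 := congrFun hc 0; have h1 := congrFun hc 1
    simp at h0 h1
    rw [h1] at h0; simp at h0
  -- the four projections
  obtain ⟨p1, hp1M, hp1, hp1k, hp1r⟩ := hcomp _ _ hK1 hIx hne1
  obtain ⟨p2, hp2M, hp2, hp2k, hp2r⟩ := hcomp _ _ hK2 hIx hne2
  obtain ⟨q1, hq1M, hq1, hq1k, hq1r⟩ := hcomp _ _ hK3 hI2 hne3
  obtain ⟨q2, hq2M, hq2, hq2k, hq2r⟩ := hcomp _ _ hK3 hI1 hne4
  -- pointwise values
  have hq1d : q1 ![(-1:ℂ),1] = 0 := by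
    have : (![(-1:ℂ),1] : Fin 2 → ℂ) ∈ LinearMap.ker q1 := by
      rw [hq1k]; exact Submodule.mem_span_singleton_self _
    exact this
  have hq1e2 : q1 ![(0:ℂ),1] = ![(0:ℂ),1] := by
    apply stmt15_fix_of_range hq1
    rw [hq1r]; exact Submodule.mem_span_singleton_self _
  have hq1u : ∀ u : Fin 2 → ℂ, q1 u = (u 0 + u 1) • ![(0:ℂ),1] := by
    intro u
    conv_lhs => rw [hd3 u]
    rw [map_add, map_smul, map_smul, hq1d, hq1e2, smul_zero, zero_add]
  have hq2d : q2 ![(-1:ℂ),1] = 0 := by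
    have : (![(-1:ℂ),1] : Fin 2 → ℂ) ∈ LinearMap.ker q2 := by
      rw [hq2k]; exact Submodule.mem_span_singleton_self _
    exact this
  have hq2e1 : q2 ![(1:ℂ),0] = ![(1:ℂ),0] := by
    apply stmt15_fix_of_range hq2
    rw [hq2r]; exact Submodule.mem_span_singleton_self _
  have hq2u : ∀ u : Fin 2 → ℂ, q2 u = (u 0 + u 1) • ![(1:ℂ),0] := by
    intro u
    conv_lhs => rw [hd4 u]
    rw [map_add, map_smul, map_smul, hq2d, hq2e1, smul_zero, zero_add]
  have hp1e1 : p1 ![(1:ℂ),0] = 0 := by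
    have : (![(1:ℂ),0] : Fin 2 → ℂ) ∈ LinearMap.ker p1 := by
      rw [hp1k]; exact Submodule.mem_span_singleton_self _
    exact this
  have hp1vx : p1 ![x,1] = ![x,1] := by
    apply stmt15_fix_of_range hp1
    rw [hp1r]; exact Submodule.mem_span_singleton_self _
  have hp1e2 : p1 ![(0:ℂ),1] = ![x,1] := by
    conv_lhs => rw [hd1]
    rw [map_add, map_smul, hp1e1, hp1vx, smul_zero, zero_add]
  have hp2e2 : p2 ![(0:ℂ),1] = 0 := by
    have : (![(0:ℂ),1] : Fin 2 → ℂ) ∈ LinearMap.ker p2 := by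
      rw [hp2k]; exact Submodule.mem_span_singleton_self _
    exact this
  have hp2vx : p2 ![x,1] = ![x,1] := by
    apply stmt15_fix_of_range hp2
    rw [hp2r]; exact Submodule.mem_span_singleton_self _
  have hp2e1 : p2 ![(1:ℂ),0] = x⁻¹ • ![x,1] := by
    conv_lhs => rw [hd2]
    rw [map_add, map_smul, map_smul, hp2e2, hp2vx, smul_zero, add_zero]
  -- first product a = p1 * q1
  have ha : ∀ u : Fin 2 → ℂ, (p1 * q1) u = (u 0 + u 1) • ![x,1] := by
    intro u
    rw [Module.End.mul_apply, hq1u, map_smul, hp1e2]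
  have hasq : (p1 * q1) * (p1 * q1) = (x + 1) • (p1 * q1) := by
    apply LinearMap.ext; intro u
    rw [Module.End.mul_apply, ha, LinearMap.smul_apply, ha]
    simp only [Pi.smul_apply, Matrix.cons_val_zero, Matrix.cons_val_one, Matrix.head_cons,
      smul_eq_mul]
    module
  have ha0 : p1 * q1 ≠ 0 := by
    intro h
    have h1 := LinearMap.congr_fun h ![(1:ℂ),0]
    rw [ha] at h1
    have h2 := congrFun h1 1
    simp at h2
  have habs1 : ‖x + 1‖ = 1 := by
    refine stmt15_abs_one M hfin (mul_mem hp1M hq1M) ?_ ha0 hasq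
    intro h
    exact hx1 (by linear_combination h)
  -- second product b = p2 * q2
  have hb : ∀ u : Fin 2 → ℂ, (p2 * q2) u = ((u 0 + u 1) * x⁻¹) • ![x,1] := by
    intro u
    rw [Module.End.mul_apply, hq2u, map_smul, hp2e1, smul_smul]
  have hbsq : (p2 * q2) * (p2 * q2) = ((x + 1) * x⁻¹) • (p2 * q2) := by
    apply LinearMap.ext; intro u
    rw [Module.End.mul_apply, hb, LinearMap.smul_apply, hb]
    simp only [Pi.smul_apply, Matrix.cons_val_zero, Matrix.cons_val_one, Matrix.head_cons,
      smul_eq_mul]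
    module
  have hb0 : p2 * q2 ≠ 0 := by
    intro h
    have h1 := LinearMap.congr_fun h ![(1:ℂ),0]
    rw [hb] at h1
    have h2 := congrFun h1 1
    simp [hx0] at h2
  have hxp1 : x + 1 ≠ 0 := fun h => hx1 (by linear_combination h)
  have habs2 : ‖(x + 1) * x⁻¹‖ = 1 := by
    refine stmt15_abs_one M hfin (mul_mem hp2M hq2M) ?_ hb0 hbsq
    exact mul_ne_zero hxp1 (inv_ne_zero hx0)
  -- conclude |x| = 1
  have habsx : ‖x‖ = 1 := by
    rw [norm_mul, norm_inv, habs1, one_mul] at habs2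
    have : ‖x‖ ≠ 0 := by
      simp [hx0]
    field_simp at habs2
    exact habs2.symm
  -- final algebra
  have h1 : x * (starRingEnd ℂ) x = 1 := by
    rw [Complex.mul_conj, Complex.normSq_eq_norm_sq, habsx]
    norm_num
  have h1' : (x + 1) * (starRingEnd ℂ) (x + 1) = 1 := by
    rw [Complex.mul_conj, Complex.normSq_eq_norm_sq, habs1]
    norm_num
  have h2 : x + (starRingEnd ℂ) x = -1 := by
    rw [map_add, map_one] at h1'
    linear_combination h1' - h1
  have h3 : x ^ 2 + x + 1 = 0 := by
    linear_combination x * h2 - h1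
  constructor
  · linear_combination (x - 1) * h3
  · intro h
    rw [h] at h3
    norm_num at h3
end

section
/- If x ∈ ℂ with x ≠ 0, −1, and both x + 1 and (x+1)/x are roots of unity, then x is a primitive cube root of unity. -/
lemma abs_eq_one_of_pow {z : ℂ} {n : ℕ} (hn : 0 < n) (h : z ^ n = 1) :
    ‖z‖ = 1 := by
  have h' : ‖z‖ ^ n = 1 := by
    rw [← norm_pow, h, norm_one]
  rcases lt_trichotomy (‖z‖) 1 with h | h | h
  · have := pow_lt_one₀ (norm_nonneg z) h hn.ne'
    linarith
  · exact h
  · have := one_lt_pow₀ h hn.ne'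
    linarith

/-- If `x ∈ ℂ` with `x ≠ 0, −1` and both `x + 1` and `(x+1)/x` are
roots of unity, then `x` is a primitive cube root of unity. -/
theorem stmt_17 (x : ℂ) (hx0 : x ≠ 0) (hx1 : x ≠ -1)
    (h1 : ∃ n : ℕ, 0 < n ∧ (x + 1) ^ n = 1)
    (h2 : ∃ n : ℕ, 0 < n ∧ ((x + 1) / x) ^ n = 1) :
    x ^ 3 = 1 ∧ x ≠ 1 := by
  obtain ⟨n, hn, h1⟩ := h1
  obtain ⟨m, hm, h2⟩ := h2
  have ha1 : ‖x + 1‖ = 1 := abs_eq_one_of_pow hn h1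
  have ha2 : ‖(x + 1) / x‖ = 1 := abs_eq_one_of_pow hm h2
  have hax : ‖x‖ = 1 := by
    rw [norm_div, ha1] at ha2
    have hx' : ‖x‖ ≠ 0 := by simpa using hx0
    field_simp at ha2
    linarith [ha2]
  have hns1 : Complex.normSq (x + 1) = 1 := by
    have := Complex.sq_norm (x + 1); rw [ha1] at this; nlinarith [this]
  have hnsx : Complex.normSq x = 1 := by
    have := Complex.sq_norm x; rw [hax] at this; nlinarith [this]
  have hc1 : (x + 1) * (starRingEnd ℂ) (x + 1) = 1 := by
    rw [Complex.mul_conj, hns1]; norm_num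
  have hcx : x * (starRingEnd ℂ) x = 1 := by
    rw [Complex.mul_conj, hnsx]; norm_num
  have hkey : x ^ 2 + x + 1 = 0 := by
    have h := hc1
    rw [map_add, map_one] at h
    have hsum : x + (starRingEnd ℂ) x = -1 := by
      have : x * (starRingEnd ℂ) x + x + (starRingEnd ℂ) x + 1 = 1 := by ring_nf; ring_nf at h; linear_combination h
      rw [hcx] at this; linear_combination this
    have : x * (x + (starRingEnd ℂ) x + 1) = x ^ 2 + 1 + x := by
      linear_combination hcx
    rw [hsum] at this
    linear_combination -this
  constructor
  · linear_combination (x - 1) * hkey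
  · intro h; rw [h] at hkey; norm_num at hkey
end
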